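/- arXiv:2405.05656 — 4 statements merged into one kernel-verified Lean document; each statement's English description precedes it below -/
import Mathlib

section
/- Let a₁,…,aₙ and b₁,…,bₙ be strictly positive real numbers, and let 0 < λ₁ < λ₂ < 1. If ∑_{i=1}^n (aᵢ − bᵢ)/(λ₁·aᵢ + (1−λ₁)·bᵢ) = 0 and ∑_{i=1}^n (aᵢ − bᵢ)/(λ₂·aᵢ + (1−λ₂)·bᵢ) = 0, then aᵢ = bᵢ for every i = 1,…,n. -/
/-! With `D(λ) = λ a + (1 - λ) b > 0`, each summand `(a - b) / D(λ)` is the derivative of the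
concave map `λ ↦ log D(λ)`; explicitly its values at `s < t` differ by
`(t - s) (a - b)² / (D(s) D(t)) ≥ 0`. Hence every summand decreases from `λ₁` to `λ₂`, and since
both sums vanish none of them can decrease strictly, which forces `a = b`. -/

section MixDeriv

variable {a b s t : ℝ}

lemma mix_pos (ha : 0 < a) (hb : 0 < b) (ht₀ : 0 ≤ t) (ht₁ : t ≤ 1) :
    0 < t * a + (1 - t) * b := by
  rcases ht₀.lt_or_eq with ht₀ | rfl
  · have := mul_pos ht₀ ha
    have := mul_nonneg (sub_nonneg.2 ht₁) hb.le
    linarith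
  · simpa using hb

lemma div_mix_sub_div_mix (hs : s * a + (1 - s) * b ≠ 0) (ht : t * a + (1 - t) * b ≠ 0) :
    (a - b) / (s * a + (1 - s) * b) - (a - b) / (t * a + (1 - t) * b)
      = (t - s) * (a - b) ^ 2 / ((s * a + (1 - s) * b) * (t * a + (1 - t) * b)) := by
  rw [div_sub_div _ _ hs ht]
  ring

lemma div_mix_le_div_mix (ha : 0 < a) (hb : 0 < b) (hs₀ : 0 ≤ s) (hst : s ≤ t) (ht₁ : t ≤ 1) :
    (a - b) / (t * a + (1 - t) * b) ≤ (a - b) / (s * a + (1 - s) * b) := by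
  have hDs := mix_pos ha hb hs₀ (hst.trans ht₁)
  have hDt := mix_pos ha hb (hs₀.trans hst) ht₁
  rw [← sub_nonneg, div_mix_sub_div_mix hDs.ne' hDt.ne']
  exact div_nonneg (mul_nonneg (sub_nonneg.2 hst) (sq_nonneg _)) (mul_pos hDs hDt).le

lemma eq_of_div_mix_eq_div_mix (ha : 0 < a) (hb : 0 < b) (hs₀ : 0 ≤ s) (hst : s < t)
    (ht₁ : t ≤ 1)
    (h : (a - b) / (s * a + (1 - s) * b) = (a - b) / (t * a + (1 - t) * b)) : a = b := by
  have hDs := mix_pos ha hb hs₀ (hst.le.trans ht₁)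
  have hDt := mix_pos ha hb (hs₀.trans hst.le) ht₁
  rw [← sub_eq_zero, div_mix_sub_div_mix hDs.ne' hDt.ne', div_eq_zero_iff,
    or_iff_left (mul_pos hDs hDt).ne', mul_eq_zero, or_iff_right (sub_pos.2 hst).ne'] at h
  exact sub_eq_zero.1 (pow_eq_zero_iff two_ne_zero |>.1 h)

end MixDeriv

/-- The paper's explicit derivative verification: if the derivative of
`λ ↦ ∑ i, log (λ * a i + (1 - λ) * b i)`, namely
`∑ i, (a i - b i) / (λ * a i + (1 - λ) * b i)`, vanishes at two distinct
interior points `λ₁ < λ₂` of `(0,1)`, then `a i = b i` for every `i`. -/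
theorem eq_of_deriv_vanishes_at_two_points
    (n : ℕ) (a b : Fin n → ℝ) (ha : ∀ i, 0 < a i) (hb : ∀ i, 0 < b i)
    (l₁ l₂ : ℝ) (h0 : 0 < l₁) (h12 : l₁ < l₂) (h1 : l₂ < 1)
    (hd₁ : ∑ i : Fin n, (a i - b i) / (l₁ * a i + (1 - l₁) * b i) = 0)
    (hd₂ : ∑ i : Fin n, (a i - b i) / (l₂ * a i + (1 - l₂) * b i) = 0) :
    ∀ i, a i = b i := by
  have hle : ∀ i ∈ Finset.univ,
      (a i - b i) / (l₂ * a i + (1 - l₂) * b i) ≤ (a i - b i) / (l₁ * a i + (1 - l₁) * b i) :=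
    fun i _ ↦ div_mix_le_div_mix (ha i) (hb i) h0.le h12.le h1.le
  have hsum : ∑ i : Fin n, (a i - b i) / (l₂ * a i + (1 - l₂) * b i)
      = ∑ i : Fin n, (a i - b i) / (l₁ * a i + (1 - l₁) * b i) := by
    rw [hd₁, hd₂]
  intro i
  exact eq_of_div_mix_eq_div_mix (ha i) (hb i) h0.le h12 h1.le
    ((Finset.sum_eq_sum_iff_of_le hle).1 hsum i (Finset.mem_univ i)).symm
end

section
/- Let Θ and 𝒴 be measurable spaces, μ a σ-finite measure on 𝒴, and f : 𝒴 × Θ → [0,∞) jointly measurable with ∫ f(y,θ) dμ(y) = 1 for every θ. For a probability measure G on Θ set f_G(y) = ∫ f(y,θ) dG(θ). Fix observations y₁,…,yₙ ∈ 𝒴 and suppose Ĝ maximizes the likelihood G ↦ ∏_{i=1}^n f_G(yᵢ) over all probability measures G on Θ, with ∏_{i=1}^n f_{Ĝ}(yᵢ) strictly positive and finite. Then for every probability measure Q on Θ, ∑_{i=1}^n f_Q(yᵢ)/f_{Ĝ}(yᵢ) ≤ n. -/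
open MeasureTheory ENNReal NNReal Set Filter Topology

/-!
Moving `Ĝ` towards `Q` along `G_t = (1 - t) • Ĝ + t • Q` keeps a probability measure, and with
`a i = f_Ĝ (y i)`, `b i = f_Q (y i)` its likelihood is `∏ a i * ∏ (1 + t * (b i / a i - 1))`.
Maximality of `Ĝ` makes `t = 0` a one-sided maximum of this polynomial, whose derivative there is
`∑ (b i / a i - 1)`; hence that sum is nonpositive. Positivity and finiteness of the likelihood
make every `a i` positive and finite, and comparing with `G_{1/2}` makes every `b i` finite.
-/

theorem HasDerivAt.nonpos_of_eventually_le_nhdsGT {g : ℝ → ℝ} {g' a : ℝ} (hg : HasDerivAt g g' a)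
    (hmax : ∀ᶠ t in 𝓝[>] a, g t ≤ g a) : g' ≤ 0 := by
  have hcone : (1 : ℝ) ∈ posTangentConeAt (Ioi a) a :=
    one_mem_posTangentConeAt_iff_frequently.2 (Eventually.frequently self_mem_nhdsWithin)
  simpa using (show IsLocalMaxOn g (Ioi a) a from hmax).hasFDerivWithinAt_nonpos
    hg.hasFDerivAt.hasFDerivWithinAt hcone

theorem hasDerivAt_prod_one_add_mul {ι : Type*} (s : Finset ι) (x : ι → ℝ) :
    HasDerivAt (fun t => ∏ i ∈ s, (1 + t * x i)) (∑ i ∈ s, x i) 0 := by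
  classical
  simpa using HasDerivAt.fun_finsetProd (u := s) (x := 0)
    (fun i _ => ((hasDerivAt_id (0 : ℝ)).mul_const (x i)).const_add 1)

theorem Finset.sum_nonpos_of_prod_one_add_mul_le_one {ι : Type*} (s : Finset ι) (x : ι → ℝ)
    (h : ∀ᶠ t in 𝓝[>] 0, ∏ i ∈ s, (1 + t * x i) ≤ 1) : ∑ i ∈ s, x i ≤ 0 :=
  (hasDerivAt_prod_one_add_mul s x).nonpos_of_eventually_le_nhdsGT (by simpa using h)

theorem Finset.sum_div_le_card_of_prod_le {ι : Type*} {s : Finset ι} {A B : ι → ℝ}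
    (hA : ∀ i ∈ s, 0 < A i)
    (h : ∀ᶠ t in 𝓝[>] 0, ∏ i ∈ s, ((1 - t) * A i + t * B i) ≤ ∏ i ∈ s, A i) :
    ∑ i ∈ s, B i / A i ≤ s.card := by
  have hprod : 0 < ∏ i ∈ s, A i := Finset.prod_pos hA
  have hfactor : ∀ t, ∀ i ∈ s, (1 - t) * A i + t * B i = A i * (1 + t * (B i / A i - 1)) := by
    intro t i hi
    field_simp [(hA i hi).ne']
    ring
  have key := s.sum_nonpos_of_prod_one_add_mul_le_one (fun i => B i / A i - 1) <| by
    filter_upwards [h] with t ht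
    rw [Finset.prod_congr rfl (hfactor t), Finset.prod_mul_distrib] at ht
    exact le_of_mul_le_mul_left (by simpa using ht) hprod
  simpa [Finset.sum_sub_distrib] using key

theorem ENNReal.ne_top_of_prod_ne_top {ι : Type*} {s : Finset ι} {a : ι → ℝ≥0∞}
    (h : ∏ i ∈ s, a i ≠ ⊤) (h0 : ∀ i ∈ s, a i ≠ 0) {i : ι} (hi : i ∈ s) : a i ≠ ⊤ :=
  fun hai => h (WithTop.prod_eq_top hi hai h0)

theorem isProbabilityMeasure_smul_add_smul {α : Type*} [MeasurableSpace α] (μ ν : Measure α)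
    [IsProbabilityMeasure μ] [IsProbabilityMeasure ν] {s t : ℝ≥0∞} (hst : s + t = 1) :
    IsProbabilityMeasure (s • μ + t • ν) :=
  ⟨by simp [hst]⟩

theorem ENNReal.sum_div_le_card_of_prod_le {ι : Type*} {s : Finset ι} {a b : ι → ℝ≥0∞}
    (h0 : ∏ i ∈ s, a i ≠ 0) (htop : ∏ i ∈ s, a i ≠ ⊤)
    (h : ∀ t ∈ Ioo (0 : ℝ) 1,
      ∏ i ∈ s, (ENNReal.ofReal (1 - t) * a i + ENNReal.ofReal t * b i) ≤ ∏ i ∈ s, a i) :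
    ∑ i ∈ s, b i / a i ≤ s.card := by
  have ha0 : ∀ i ∈ s, a i ≠ 0 := Finset.prod_ne_zero_iff.1 h0
  have ha : ∀ i ∈ s, a i ≠ ⊤ := fun i => ENNReal.ne_top_of_prod_ne_top htop ha0
  have hb : ∀ i ∈ s, b i ≠ ⊤ := by
    intro i hi hbi
    have hhalf : ENNReal.ofReal (1 / 2) ≠ 0 := by norm_num
    have hmix := h (1 / 2) ⟨by norm_num, by norm_num⟩
    refine ENNReal.ne_top_of_prod_ne_top (ne_top_of_le_ne_top htop hmix)
      (fun j hj => ?_) hi (by norm_num [hbi, ENNReal.mul_top hhalf])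
    norm_num [ha0 j hj]
  have hreal : ∑ i ∈ s, (b i).toReal / (a i).toReal ≤ s.card := by
    refine Finset.sum_div_le_card_of_prod_le
      (fun i hi => ENNReal.toReal_pos (ha0 i hi) (ha i hi)) ?_
    filter_upwards [Ioo_mem_nhdsGT one_pos] with t ht
    have := ENNReal.toReal_mono htop (h t ht)
    rwa [ENNReal.toReal_prod, ENNReal.toReal_prod, Finset.prod_congr rfl fun i hi => by
      rw [ENNReal.toReal_add (by finiteness [ha i hi]) (by finiteness [hb i hi]),
        ENNReal.toReal_mul, ENNReal.toReal_mul, ENNReal.toReal_ofReal (by linarith [ht.2]),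
        ENNReal.toReal_ofReal ht.1.le]] at this
  calc ∑ i ∈ s, b i / a i = ENNReal.ofReal (∑ i ∈ s, (b i).toReal / (a i).toReal) := by
        rw [ENNReal.ofReal_sum_of_nonneg fun i _ => by positivity]
        refine Finset.sum_congr rfl fun i hi => ?_
        rw [← ENNReal.toReal_div, ENNReal.ofReal_toReal (ENNReal.div_ne_top (hb i hi) (ha0 i hi))]
    _ ≤ s.card := by simpa using ENNReal.ofReal_le_ofReal hreal

theorem gmle_first_order_condition_general
    {Θ 𝒴 : Type*} [MeasurableSpace Θ]
    (f : 𝒴 → Θ → ℝ≥0)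
    (n : ℕ) (y : Fin n → 𝒴)
    (Ghat : Measure Θ) [IsProbabilityMeasure Ghat]
    (hGhat : ∀ G : Measure Θ, IsProbabilityMeasure G →
      ∏ i : Fin n, ∫⁻ θ, (f (y i) θ : ℝ≥0∞) ∂G ≤
        ∏ i : Fin n, ∫⁻ θ, (f (y i) θ : ℝ≥0∞) ∂Ghat)
    (hpos : 0 < ∏ i : Fin n, ∫⁻ θ, (f (y i) θ : ℝ≥0∞) ∂Ghat)
    (hfin : ∏ i : Fin n, ∫⁻ θ, (f (y i) θ : ℝ≥0∞) ∂Ghat < ⊤) :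
    ∀ Q : Measure Θ, IsProbabilityMeasure Q →
      ∑ i : Fin n, (∫⁻ θ, (f (y i) θ : ℝ≥0∞) ∂Q) / (∫⁻ θ, (f (y i) θ : ℝ≥0∞) ∂Ghat)
        ≤ (n : ℝ≥0∞) := by
  intro Q hQ
  have hmix : ∀ t ∈ Ioo (0 : ℝ) 1,
      IsProbabilityMeasure (ENNReal.ofReal (1 - t) • Ghat + ENNReal.ofReal t • Q) := fun t ht =>
    isProbabilityMeasure_smul_add_smul Ghat Q <| by
      rw [← ENNReal.ofReal_add (by linarith [ht.2]) ht.1.le, sub_add_cancel, ENNReal.ofReal_one]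
  simpa using ENNReal.sum_div_le_card_of_prod_le hpos.ne' hfin.ne fun t ht => by
    simpa [lintegral_add_measure, lintegral_smul_measure] using hGhat _ (hmix t ht)

/-- First-order optimality condition of a GMLE: if `Ghat` maximizes the
likelihood `G ↦ ∏ i, f_G (y i)` over probability measures on `Θ`, with the
maximal likelihood strictly positive and finite, then for every probability
measure `Q` on `Θ` we have `∑ i, f_Q (y i) / f_{Ghat} (y i) ≤ n`. -/
theorem gmle_first_order_condition
    {Θ 𝒴 : Type*} [MeasurableSpace Θ] [MeasurableSpace 𝒴]
    (μ : Measure 𝒴) [SigmaFinite μ]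
    (f : 𝒴 → Θ → ℝ≥0) (hf : Measurable (Function.uncurry f))
    (hf1 : ∀ θ, ∫⁻ y, (f y θ : ℝ≥0∞) ∂μ = 1)
    (n : ℕ) (y : Fin n → 𝒴)
    (Ghat : Measure Θ) [IsProbabilityMeasure Ghat]
    (hGhat : ∀ G : Measure Θ, IsProbabilityMeasure G →
      ∏ i : Fin n, ∫⁻ θ, (f (y i) θ : ℝ≥0∞) ∂G ≤
        ∏ i : Fin n, ∫⁻ θ, (f (y i) θ : ℝ≥0∞) ∂Ghat)
    (hpos : 0 < ∏ i : Fin n, ∫⁻ θ, (f (y i) θ : ℝ≥0∞) ∂Ghat)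
    (hfin : ∏ i : Fin n, ∫⁻ θ, (f (y i) θ : ℝ≥0∞) ∂Ghat < ⊤) :
    ∀ Q : Measure Θ, IsProbabilityMeasure Q →
      ∑ i : Fin n, (∫⁻ θ, (f (y i) θ : ℝ≥0∞) ∂Q) / (∫⁻ θ, (f (y i) θ : ℝ≥0∞) ∂Ghat)
        ≤ (n : ℝ≥0∞) :=
  gmle_first_order_condition_general f n y Ghat hGhat hpos hfin
end

section
/- Let Θ be a measurable space, 𝒴 a finite nonempty set, and f : 𝒴 × Θ → (0,∞) measurable in θ with ∑_{y ∈ 𝒴} f(y,θ) = 1 for every θ. For a probability measure G on Θ set f_G(y) = ∫ f(y,θ) dG(θ). Fix observations y₁,…,yₙ ∈ 𝒴 such that every element of 𝒴 occurs among y₁,…,yₙ. If Ĝ₁ and Ĝ₂ both maximize the likelihood G ↦ ∏_{i=1}^n f_G(yᵢ) over all probability measures G on Θ, then f_{Ĝ₁}(y) = f_{Ĝ₂}(y) for every y ∈ 𝒴. -/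
/-!
Let `a i` and `b i` be the likelihood factors `∫ f(yᵢ, θ) dG(θ)` of two GMLEs `G₁` and `G₂`; both
likelihoods equal the maximum `L`. The mixture `(G₁ + G₂) / 2` has factors `(a i + b i) / 2`, so
maximality gives `∏ (a i + b i) / 2 ≤ L = √(∏ a i * ∏ b i)`. Factorwise AM-GM gives the reverse
inequality, strictly as soon as some `a i ≠ b i`. Hence `a = b`, and since every outcome occurs
among the observations, the two mixture densities agree everywhere.
-/

open MeasureTheory ENNReal NNReal

section AMGM

variable {R : Type*} [Field R] [LinearOrder R] [IsStrictOrderedRing R]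

lemma mul_le_sq_midpoint (a b : R) : a * b ≤ ((a + b) / 2) ^ 2 := by
  nlinarith [sq_nonneg (a - b)]

lemma mul_lt_sq_midpoint {a b : R} (h : a ≠ b) : a * b < ((a + b) / 2) ^ 2 := by
  nlinarith [sq_pos_of_ne_zero (sub_ne_zero.2 h)]

theorem eq_of_prod_eq_of_prod_midpoint_le {ι : Type*} [Fintype ι] {a b : ι → R}
    (ha : ∀ i, 0 < a i) (hb : ∀ i, 0 < b i) (hab : ∏ i, a i = ∏ i, b i)
    (hmid : ∏ i, (a i + b i) / 2 ≤ ∏ i, a i) : a = b := by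
  by_contra hne
  obtain ⟨j, hj⟩ := Function.ne_iff.1 hne
  have hlt : ∏ i, a i * b i < ∏ i, ((a i + b i) / 2) ^ 2 :=
    Finset.prod_lt_prod (fun i _ => mul_pos (ha i) (hb i)) (fun i _ => mul_le_sq_midpoint _ _)
      ⟨j, Finset.mem_univ j, mul_lt_sq_midpoint hj⟩
  have hmid_nonneg : 0 ≤ ∏ i, (a i + b i) / 2 :=
    Finset.prod_nonneg fun i _ => (half_pos (add_pos (ha i) (hb i))).le
  have hge : ∏ i, ((a i + b i) / 2) ^ 2 ≤ ∏ i, a i * b i :=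
    calc ∏ i, ((a i + b i) / 2) ^ 2 = (∏ i, (a i + b i) / 2) ^ 2 := Finset.prod_pow _ _ _
      _ ≤ (∏ i, a i) ^ 2 := pow_le_pow_left₀ hmid_nonneg hmid 2
      _ = ∏ i, a i * b i := by rw [sq, Finset.prod_mul_distrib, ← hab]
  exact (hlt.trans_le hge).false

end AMGM

theorem ENNReal.eq_of_prod_eq_of_prod_midpoint_le {ι : Type*} [Fintype ι] {a b : ι → ℝ≥0∞}
    (ha₀ : ∀ i, a i ≠ 0) (hb₀ : ∀ i, b i ≠ 0) (ha : ∀ i, a i ≠ ∞) (hb : ∀ i, b i ≠ ∞)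
    (hab : ∏ i, a i = ∏ i, b i) (hmid : ∏ i, (a i + b i) / 2 ≤ ∏ i, a i) : a = b := by
  have hreal : (fun i => (a i).toReal) = fun i => (b i).toReal := by
    refine _root_.eq_of_prod_eq_of_prod_midpoint_le (fun i => toReal_pos (ha₀ i) (ha i))
      (fun i => toReal_pos (hb₀ i) (hb i)) ?_ ?_
    · simpa only [toReal_prod] using congrArg ENNReal.toReal hab
    · have hmid_real := toReal_mono (prod_ne_top fun i _ => ha i) hmid
      simpa only [toReal_prod, toReal_div, toReal_add (ha _) (hb _), toReal_ofNat] using hmid_real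
  funext i
  exact (toReal_eq_toReal_iff' (ha i) (hb i)).1 (congrFun hreal i)

section Mixture

variable {Θ : Type*} [MeasurableSpace Θ]

instance isProbabilityMeasure_half_smul_add_half_smul (μ ν : Measure Θ) [IsProbabilityMeasure μ]
    [IsProbabilityMeasure ν] : IsProbabilityMeasure ((2⁻¹ : ℝ≥0∞) • μ + (2⁻¹ : ℝ≥0∞) • ν) :=
  ⟨by simp [inv_two_add_inv_two]⟩

lemma lintegral_half_smul_add_half_smul (g : Θ → ℝ≥0∞) (μ ν : Measure Θ) :
    ∫⁻ θ, g θ ∂((2⁻¹ : ℝ≥0∞) • μ + (2⁻¹ : ℝ≥0∞) • ν) = (∫⁻ θ, g θ ∂μ + ∫⁻ θ, g θ ∂ν) / 2 := by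
  rw [lintegral_add_measure, lintegral_smul_measure, lintegral_smul_measure, smul_eq_mul,
    smul_eq_mul, ← mul_add, ENNReal.div_eq_inv_mul]

lemma lintegral_coe_ne_zero_of_pos {g : Θ → ℝ≥0} (hg : Measurable g) (hpos : ∀ θ, 0 < g θ)
    (μ : Measure Θ) [NeZero μ] : ∫⁻ θ, (g θ : ℝ≥0∞) ∂μ ≠ 0 := by
  rw [Ne, lintegral_eq_zero_iff hg.coe_nnreal_ennreal]
  intro h
  obtain ⟨θ, hθ⟩ := h.exists
  exact (hpos θ).ne' (by simpa using hθ)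

theorem lintegral_eq_of_forall_prod_lintegral_le {ι : Type*} [Fintype ι] (g : ι → Θ → ℝ≥0∞)
    {μ ν : Measure Θ} [IsProbabilityMeasure μ] [IsProbabilityMeasure ν]
    (hμ₀ : ∀ i, ∫⁻ θ, g i θ ∂μ ≠ 0) (hν₀ : ∀ i, ∫⁻ θ, g i θ ∂ν ≠ 0)
    (hμ_top : ∀ i, ∫⁻ θ, g i θ ∂μ ≠ ∞) (hν_top : ∀ i, ∫⁻ θ, g i θ ∂ν ≠ ∞)
    (hμ : ∀ G : Measure Θ, IsProbabilityMeasure G →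
      ∏ i, ∫⁻ θ, g i θ ∂G ≤ ∏ i, ∫⁻ θ, g i θ ∂μ)
    (hν : ∀ G : Measure Θ, IsProbabilityMeasure G →
      ∏ i, ∫⁻ θ, g i θ ∂G ≤ ∏ i, ∫⁻ θ, g i θ ∂ν) (i : ι) :
    ∫⁻ θ, g i θ ∂μ = ∫⁻ θ, g i θ ∂ν := by
  have hmid := hμ ((2⁻¹ : ℝ≥0∞) • μ + (2⁻¹ : ℝ≥0∞) • ν) inferInstance
  simp only [lintegral_half_smul_add_half_smul] at hmid
  have hsame := le_antisymm (hν μ inferInstance) (hμ ν inferInstance)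
  exact congrFun (ENNReal.eq_of_prod_eq_of_prod_midpoint_le hμ₀ hν₀ hμ_top hν_top hsame hmid) i

end Mixture

theorem gmle_mixture_density_eq_everywhere_of_finite_support_general
    {Θ 𝒴 : Type*} [MeasurableSpace Θ] [Fintype 𝒴]
    (f : 𝒴 → Θ → ℝ≥0) (hfpos : ∀ y θ, 0 < f y θ)
    (hfmeas : ∀ y, Measurable fun θ => f y θ)
    (hf1 : ∀ θ, ∑ y : 𝒴, f y θ = 1)
    (n : ℕ) (y : Fin n → 𝒴) (hy : Function.Surjective y)
    (G₁ G₂ : Measure Θ) [IsProbabilityMeasure G₁] [IsProbabilityMeasure G₂]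
    (hG₁ : ∀ G : Measure Θ, IsProbabilityMeasure G →
      ∏ i : Fin n, ∫⁻ θ, (f (y i) θ : ℝ≥0∞) ∂G ≤
        ∏ i : Fin n, ∫⁻ θ, (f (y i) θ : ℝ≥0∞) ∂G₁)
    (hG₂ : ∀ G : Measure Θ, IsProbabilityMeasure G →
      ∏ i : Fin n, ∫⁻ θ, (f (y i) θ : ℝ≥0∞) ∂G ≤
        ∏ i : Fin n, ∫⁻ θ, (f (y i) θ : ℝ≥0∞) ∂G₂) :
    ∀ v : 𝒴, ∫⁻ θ, (f v θ : ℝ≥0∞) ∂G₁ = ∫⁻ θ, (f v θ : ℝ≥0∞) ∂G₂ := by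
  have hf_le_one (u : 𝒴) (θ : Θ) : f u θ ≤ 1 :=
    hf1 θ ▸ Finset.single_le_sum (f := (f · θ)) (fun _ _ => zero_le) (Finset.mem_univ u)
  have hne_zero (G : Measure Θ) [IsProbabilityMeasure G] (u : 𝒴) :
      ∫⁻ θ, (f u θ : ℝ≥0∞) ∂G ≠ 0 :=
    lintegral_coe_ne_zero_of_pos (hfmeas u) (hfpos u) G
  have hne_top (G : Measure Θ) [IsProbabilityMeasure G] (u : 𝒴) :
      ∫⁻ θ, (f u θ : ℝ≥0∞) ∂G ≠ ∞ :=
    (IsFiniteMeasure.lintegral_lt_top_of_bounded_to_ennreal G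
      ⟨1, fun θ => coe_le_one_iff.2 (hf_le_one u θ)⟩).ne
  intro v
  obtain ⟨i, rfl⟩ := hy v
  exact lintegral_eq_of_forall_prod_lintegral_le (fun i θ => (f (y i) θ : ℝ≥0∞))
    (fun i => hne_zero G₁ (y i)) (fun i => hne_zero G₂ (y i)) (fun i => hne_top G₁ (y i))
    (fun i => hne_top G₂ (y i)) hG₁ hG₂ i

/-- Equation (14) of the paper: in the finite-support case, once every
possible outcome is realized among the observations, any two GMLEs induce
identical mixture densities on all of `𝒴`. -/
theorem gmle_mixture_density_eq_everywhere_of_finite_support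
    {Θ 𝒴 : Type*} [MeasurableSpace Θ] [Fintype 𝒴] [Nonempty 𝒴]
    (f : 𝒴 → Θ → ℝ≥0) (hfpos : ∀ y θ, 0 < f y θ)
    (hfmeas : ∀ y, Measurable fun θ => f y θ)
    (hf1 : ∀ θ, ∑ y : 𝒴, f y θ = 1)
    (n : ℕ) (y : Fin n → 𝒴) (hy : Function.Surjective y)
    (G₁ G₂ : Measure Θ) [IsProbabilityMeasure G₁] [IsProbabilityMeasure G₂]
    (hG₁ : ∀ G : Measure Θ, IsProbabilityMeasure G →
      ∏ i : Fin n, ∫⁻ θ, (f (y i) θ : ℝ≥0∞) ∂G ≤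
        ∏ i : Fin n, ∫⁻ θ, (f (y i) θ : ℝ≥0∞) ∂G₁)
    (hG₂ : ∀ G : Measure Θ, IsProbabilityMeasure G →
      ∏ i : Fin n, ∫⁻ θ, (f (y i) θ : ℝ≥0∞) ∂G ≤
        ∏ i : Fin n, ∫⁻ θ, (f (y i) θ : ℝ≥0∞) ∂G₂) :
    ∀ v : 𝒴, ∫⁻ θ, (f v θ : ℝ≥0∞) ∂G₁ = ∫⁻ θ, (f v θ : ℝ≥0∞) ∂G₂ :=
  gmle_mixture_density_eq_everywhere_of_finite_support_general f hfpos hfmeas hf1 n y hy G₁ G₂ hG₁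
    hG₂
end

section
/- Let Θ be a measurable space, 𝒴 a finite nonempty set, and f : 𝒴 × Θ → (0,∞) measurable in θ with ∑_{y ∈ 𝒴} f(y,θ) = 1 for every θ. Let h : 𝒴 → ℝ be bounded and define η(θ) = ∑_{y ∈ 𝒴} h(y) f(y,θ). Let y₁, y₂, … be a sequence in 𝒴 such that there exists N with every element of 𝒴 occurring among y₁,…,y_N. For each n, let Ĝ₁ⁿ and Ĝ₂ⁿ be probability measures on Θ that both maximize G ↦ ∏_{i=1}^n f_G(yᵢ) over all probability measures G on Θ. Then the sequence ∫ η dĜ₁ⁿ − ∫ η dĜ₂ⁿ converges to 0 as n → ∞. -/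
/-!
If `G₁` and `G₂` both maximise the likelihood `∏ᵢ f_G(yᵢ)`, then so does their midpoint
`(G₁ + G₂)/2`: its likelihood is `∏ᵢ (f_{G₁}(yᵢ) + f_{G₂}(yᵢ))/2`, and by AM-GM this is at least
`√(∏ᵢ f_{G₁}(yᵢ) ∏ᵢ f_{G₂}(yᵢ))`, the common maximal value, with equality only if
`f_{G₁}(yᵢ) = f_{G₂}(yᵢ)` for every `i`. Hence two GMLEs have the same fitted mixture
probabilities at every observed point. Once every point of `𝒴` has been observed, the mixture
means `E_G η = ∑ᵥ h v f_G(v)` of the two GMLEs coincide, so their difference is eventually `0`.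
-/

open MeasureTheory ENNReal NNReal Filter

theorem Finset.eqOn_of_prod_eq_of_prod_midpoint_le {ι R : Type*} [Field R] [LinearOrder R]
    [IsStrictOrderedRing R] {s : Finset ι} {a b : ι → R}
    (ha : ∀ i ∈ s, 0 < a i) (hb : ∀ i ∈ s, 0 < b i) (hab : ∏ i ∈ s, a i = ∏ i ∈ s, b i)
    (hmid : ∏ i ∈ s, (a i + b i) / 2 ≤ ∏ i ∈ s, a i) :
    Set.EqOn a b s := by
  have amgm : ∀ i ∈ s, a i * b i ≤ ((a i + b i) / 2) ^ 2 := fun i _ => by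
    nlinarith [sq_nonneg (a i - b i)]
  by_contra hne
  obtain ⟨i, hi, hi_ne⟩ : ∃ i ∈ s, a i ≠ b i := by simpa [Set.EqOn] using hne
  have amgm_lt : a i * b i < ((a i + b i) / 2) ^ 2 := by
    nlinarith [sq_pos_of_ne_zero (sub_ne_zero.2 hi_ne)]
  have hlt : ∏ j ∈ s, a j * b j < ∏ j ∈ s, ((a j + b j) / 2) ^ 2 :=
    Finset.prod_lt_prod (fun j hj => mul_pos (ha j hj) (hb j hj)) amgm ⟨i, hi, amgm_lt⟩
  have hmid_nonneg : 0 ≤ ∏ j ∈ s, (a j + b j) / 2 :=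
    Finset.prod_nonneg fun j hj => by linarith [ha j hj, hb j hj]
  have hle : (∏ j ∈ s, (a j + b j) / 2) ^ 2 ≤ (∏ j ∈ s, a j) ^ 2 :=
    pow_le_pow_left₀ hmid_nonneg hmid 2
  rw [Finset.prod_mul_distrib, ← hab, Finset.prod_pow] at hlt
  exact (hlt.trans_le hle).ne (sq _).symm

theorem ENNReal.eqOn_of_prod_eq_of_prod_midpoint_le {ι : Type*} {s : Finset ι} {a b : ι → ℝ≥0∞}
    (ha₀ : ∀ i ∈ s, a i ≠ 0) (ha : ∀ i ∈ s, a i ≠ ∞)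
    (hb₀ : ∀ i ∈ s, b i ≠ 0) (hb : ∀ i ∈ s, b i ≠ ∞)
    (hab : ∏ i ∈ s, a i = ∏ i ∈ s, b i)
    (hmid : ∏ i ∈ s, (2⁻¹ * a i + 2⁻¹ * b i) ≤ ∏ i ∈ s, a i) :
    Set.EqOn a b s := by
  have hmid_toReal : ∀ i ∈ s, (2⁻¹ * a i + 2⁻¹ * b i).toReal = ((a i).toReal + (b i).toReal) / 2 :=
    fun i hi => by
      rw [← mul_add, ENNReal.toReal_mul, ENNReal.toReal_add (ha i hi) (hb i hi)]
      simp [div_eq_inv_mul]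
  have hreal := Finset.eqOn_of_prod_eq_of_prod_midpoint_le (s := s)
    (a := fun i => (a i).toReal) (b := fun i => (b i).toReal)
    (fun i hi => ENNReal.toReal_pos (ha₀ i hi) (ha i hi))
    (fun i hi => ENNReal.toReal_pos (hb₀ i hi) (hb i hi))
    (by simp only [← ENNReal.toReal_prod, hab])
    (by
      rw [← Finset.prod_congr rfl hmid_toReal, ← ENNReal.toReal_prod, ← ENNReal.toReal_prod]
      exact ENNReal.toReal_mono (ENNReal.prod_ne_top ha) hmid)
  exact fun i hi => (ENNReal.toReal_eq_toReal_iff' (ha i hi) (hb i hi)).1 (hreal hi)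

section Mixture

variable {Θ 𝒴 : Type*} [MeasurableSpace Θ]

noncomputable def mixtureLikelihood (f : 𝒴 → Θ → ℝ≥0) (y : ℕ → 𝒴) (n : ℕ) (G : Measure Θ) : ℝ≥0∞ :=
  ∏ i ∈ Finset.range n, ∫⁻ θ, (f (y i) θ : ℝ≥0∞) ∂G

def IsGMLE (f : 𝒴 → Θ → ℝ≥0) (y : ℕ → 𝒴) (n : ℕ) (G : Measure Θ) : Prop :=
  IsProbabilityMeasure G ∧
    ∀ G' : Measure Θ, IsProbabilityMeasure G' →
      mixtureLikelihood f y n G' ≤ mixtureLikelihood f y n G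

theorem isProbabilityMeasure_midpoint (μ ν : Measure Θ) [IsProbabilityMeasure μ]
    [IsProbabilityMeasure ν] : IsProbabilityMeasure ((2⁻¹ : ℝ≥0∞) • μ + (2⁻¹ : ℝ≥0∞) • ν) :=
  ⟨by simp [ENNReal.inv_two_add_inv_two]⟩

theorem lintegral_coe_pos {f : Θ → ℝ≥0} (hf : Measurable f) (hpos : ∀ θ, 0 < f θ)
    (G : Measure Θ) [NeZero G] : 0 < ∫⁻ θ, (f θ : ℝ≥0∞) ∂G := by
  have hsupp : Function.support (fun θ => (f θ : ℝ≥0∞)) = Set.univ :=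
    Set.eq_univ_of_forall fun θ => by simpa using (hpos θ).ne'
  rw [lintegral_pos_iff_support hf.coe_nnreal_ennreal, hsupp]
  exact Measure.measure_univ_pos.2 (NeZero.ne G)

theorem lintegral_coe_le_one {f : Θ → ℝ≥0} (hf : ∀ θ, f θ ≤ 1)
    (G : Measure Θ) [IsProbabilityMeasure G] : ∫⁻ θ, (f θ : ℝ≥0∞) ∂G ≤ 1 :=
  (lintegral_mono fun θ => ENNReal.coe_le_one_iff.2 (hf θ)).trans_eq (by simp)

theorem IsGMLE.lintegral_eq {f : 𝒴 → Θ → ℝ≥0} (hfpos : ∀ v θ, 0 < f v θ)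
    (hfmeas : ∀ v, Measurable (f v)) (hfle : ∀ v θ, f v θ ≤ 1) {y : ℕ → 𝒴} {n : ℕ}
    {G₁ G₂ : Measure Θ} (h₁ : IsGMLE f y n G₁) (h₂ : IsGMLE f y n G₂) {i : ℕ} (hi : i < n) :
    ∫⁻ θ, (f (y i) θ : ℝ≥0∞) ∂G₁ = ∫⁻ θ, (f (y i) θ : ℝ≥0∞) ∂G₂ := by
  have := h₁.1
  have := h₂.1
  have hG_ne_top : ∀ (G : Measure Θ) [IsProbabilityMeasure G] (j : ℕ),
      ∫⁻ θ, (f (y j) θ : ℝ≥0∞) ∂G ≠ ∞ :=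
    fun G _ j => ne_top_of_le_ne_top one_ne_top (lintegral_coe_le_one (hfle (y j)) G)
  refine ENNReal.eqOn_of_prod_eq_of_prod_midpoint_le (s := Finset.range n)
    (fun j _ => (lintegral_coe_pos (hfmeas _) (hfpos _) G₁).ne') (fun j _ => hG_ne_top G₁ j)
    (fun j _ => (lintegral_coe_pos (hfmeas _) (hfpos _) G₂).ne') (fun j _ => hG_ne_top G₂ j)
    (le_antisymm (h₂.2 G₁ h₁.1) (h₁.2 G₂ h₂.1)) ?_ (Finset.mem_range.2 hi)
  simpa [mixtureLikelihood, lintegral_add_measure, lintegral_smul_measure] using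
    h₁.2 _ (isProbabilityMeasure_midpoint G₁ G₂)

theorem integral_sum_mul_coe_eq [Fintype 𝒴] {f : 𝒴 → Θ → ℝ≥0} (hfmeas : ∀ v, Measurable (f v))
    (hfle : ∀ v θ, f v θ ≤ 1) (h : 𝒴 → ℝ) (G : Measure Θ) [IsProbabilityMeasure G] :
    ∫ θ, (∑ v : 𝒴, h v * (f v θ : ℝ)) ∂G = ∑ v : 𝒴, h v * (∫⁻ θ, (f v θ : ℝ≥0∞) ∂G).toReal := by
  have hmeas : ∀ v, AEStronglyMeasurable (fun θ => (f v θ : ℝ)) G :=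
    fun v => (hfmeas v).coe_nnreal_real.aestronglyMeasurable
  have hint : ∀ v, Integrable (fun θ => (f v θ : ℝ)) G := fun v =>
    .of_bound (hmeas v) 1 (.of_forall fun θ => by simpa using hfle v θ)
  rw [integral_finsetSum _ fun v _ => (hint v).const_mul (h v)]
  refine Finset.sum_congr rfl fun v _ => ?_
  rw [integral_const_mul,
    integral_eq_lintegral_of_nonneg_ae (.of_forall fun θ => (f v θ).coe_nonneg) (hmeas v)]
  simp

end Mixture

theorem gmle_mixture_mean_difference_tendsto_zero_general
    {Θ 𝒴 : Type*} [MeasurableSpace Θ] [Fintype 𝒴]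
    (f : 𝒴 → Θ → ℝ≥0) (hfpos : ∀ y θ, 0 < f y θ)
    (hfmeas : ∀ y, Measurable fun θ => f y θ)
    (hf1 : ∀ θ, ∑ y : 𝒴, f y θ = 1)
    (h : 𝒴 → ℝ)
    (y : ℕ → 𝒴) (hy : ∃ N : ℕ, ∀ v : 𝒴, ∃ i < N, y i = v)
    (G₁ G₂ : ℕ → Measure Θ)
    (hG₁prob : ∀ n, IsProbabilityMeasure (G₁ n))
    (hG₂prob : ∀ n, IsProbabilityMeasure (G₂ n))
    (hG₁ : ∀ n, ∀ G : Measure Θ, IsProbabilityMeasure G →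
      ∏ i ∈ Finset.range n, ∫⁻ θ, (f (y i) θ : ℝ≥0∞) ∂G ≤
        ∏ i ∈ Finset.range n, ∫⁻ θ, (f (y i) θ : ℝ≥0∞) ∂(G₁ n))
    (hG₂ : ∀ n, ∀ G : Measure Θ, IsProbabilityMeasure G →
      ∏ i ∈ Finset.range n, ∫⁻ θ, (f (y i) θ : ℝ≥0∞) ∂G ≤
        ∏ i ∈ Finset.range n, ∫⁻ θ, (f (y i) θ : ℝ≥0∞) ∂(G₂ n)) :
    Tendsto (fun n : ℕ =>
        (∫ θ, (∑ v : 𝒴, h v * (f v θ : ℝ)) ∂(G₁ n))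
          - ∫ θ, (∑ v : 𝒴, h v * (f v θ : ℝ)) ∂(G₂ n))
      atTop (nhds 0) := by
  obtain ⟨N, hN⟩ := hy
  have hfle : ∀ v θ, f v θ ≤ 1 := fun v θ =>
    hf1 θ ▸ Finset.single_le_sum (f := (f · θ)) (fun _ _ => zero_le) (Finset.mem_univ v)
  refine tendsto_const_nhds.congr' (eventually_atTop.2 ⟨N, fun n hn => ?_⟩)
  have hfit : ∀ v, ∫⁻ θ, (f v θ : ℝ≥0∞) ∂G₁ n = ∫⁻ θ, (f v θ : ℝ≥0∞) ∂G₂ n := fun v => by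
    obtain ⟨i, hi, rfl⟩ := hN v
    exact IsGMLE.lintegral_eq hfpos hfmeas hfle ⟨hG₁prob n, hG₁ n⟩ ⟨hG₂prob n, hG₂ n⟩
      (hi.trans_le hn)
  have := hG₁prob n
  have := hG₂prob n
  simp only [integral_sum_mul_coe_eq hfmeas hfle, hfit, sub_self]

/-- The paper's Theorem 1 (finite support): if every element of the finite
sample space occurs among the first `N` observations, then for any two
sequences `G₁ⁿ`, `G₂ⁿ` of GMLEs (each based on the first `n` observations),
the difference of the estimated mixture means
`E_{G₁ⁿ} η(θ) − E_{G₂ⁿ} η(θ)` tends to `0`, where `η θ = ∑ y, h y * f y θ`. -/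
theorem gmle_mixture_mean_difference_tendsto_zero
    {Θ 𝒴 : Type*} [MeasurableSpace Θ] [Fintype 𝒴] [Nonempty 𝒴]
    (f : 𝒴 → Θ → ℝ≥0) (hfpos : ∀ y θ, 0 < f y θ)
    (hfmeas : ∀ y, Measurable fun θ => f y θ)
    (hf1 : ∀ θ, ∑ y : 𝒴, f y θ = 1)
    (h : 𝒴 → ℝ)
    (y : ℕ → 𝒴) (hy : ∃ N : ℕ, ∀ v : 𝒴, ∃ i < N, y i = v)
    (G₁ G₂ : ℕ → Measure Θ)
    (hG₁prob : ∀ n, IsProbabilityMeasure (G₁ n))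
    (hG₂prob : ∀ n, IsProbabilityMeasure (G₂ n))
    (hG₁ : ∀ n, ∀ G : Measure Θ, IsProbabilityMeasure G →
      ∏ i ∈ Finset.range n, ∫⁻ θ, (f (y i) θ : ℝ≥0∞) ∂G ≤
        ∏ i ∈ Finset.range n, ∫⁻ θ, (f (y i) θ : ℝ≥0∞) ∂(G₁ n))
    (hG₂ : ∀ n, ∀ G : Measure Θ, IsProbabilityMeasure G →
      ∏ i ∈ Finset.range n, ∫⁻ θ, (f (y i) θ : ℝ≥0∞) ∂G ≤
        ∏ i ∈ Finset.range n, ∫⁻ θ, (f (y i) θ : ℝ≥0∞) ∂(G₂ n)) :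
    Tendsto (fun n : ℕ =>
        (∫ θ, (∑ v : 𝒴, h v * (f v θ : ℝ)) ∂(G₁ n))
          - ∫ θ, (∑ v : 𝒴, h v * (f v θ : ℝ)) ∂(G₂ n))
      atTop (nhds 0) :=
  gmle_mixture_mean_difference_tendsto_zero_general f hfpos hfmeas hf1 h y hy G₁ G₂ hG₁prob hG₂prob
    hG₁ hG₂
end
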